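/- arXiv:1702.08799 — 2 statements merged into one kernel-verified Lean document; each statement's English description precedes it below -/
import Mathlib

section
/- With F : D × S^n → hat-H^{2,n} as in the warped product parametrization, the pullback by F of the pseudo-Riemannian metric induced by q equals (4/(1-||u||^2)^2) g_D ⊕ -((1+||u||^2)/(1-||u||^2))^2 g_{S^n}, where g_D is the flat Euclidean metric on the disc and g_{S^n} the round metric of curvature 1 on S^n. -/
/-! Write `λ = 2 / (1 - ‖u‖²)`. On the disc `F(u, v) = (λ u, (λ - 1) v)`, so both scaling factors
have differential `λ² ⟪u, ·⟫`. In `‖dF(a, b)‖²` the cross term of the second factor vanishes because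
`⟪v, b⟫ = 0`, and the `⟪u, a⟫²` terms add up to `λ³ ⟪u, a⟫² (2 - λ (1 - ‖u‖²)) = 0`. -/

open scoped RealInnerProductSpace

/-- The warped product parametrization `F(u,v) = ((2/(1-‖u‖²)) u, ((1+‖u‖²)/(1-‖u‖²)) v)`
of the quadric `{q = -1}` in `ℝ^{2,n+1} = ℝ² ⊕ ℝ^{n+1}` (with
`q(a,b) = ‖a‖² - ‖b‖²`). -/
noncomputable def warpF (n : ℕ)
    (p : EuclideanSpace ℝ (Fin 2) × EuclideanSpace ℝ (Fin (n + 1))) :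
    EuclideanSpace ℝ (Fin 2) × EuclideanSpace ℝ (Fin (n + 1)) :=
  ((2 / (1 - ‖p.1‖ ^ 2)) • p.1, ((1 + ‖p.1‖ ^ 2) / (1 - ‖p.1‖ ^ 2)) • p.2)

section
variable {E F : Type*} [NormedAddCommGroup E] [InnerProductSpace ℝ E]
  [NormedAddCommGroup F] [InnerProductSpace ℝ F]

theorem fderiv_smul_prodMk_smul_apply {f g : E → ℝ} {f' g' : E →L[ℝ] ℝ} {u : E} (v : F)
    (hf : HasFDerivAt f f' u) (hg : HasFDerivAt g g' u) (a : E) (b : F) :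
    fderiv ℝ (fun p : E × F => (f p.1 • p.1, g p.1 • p.2)) (u, v) (a, b)
      = (f u • a + f' a • u, g u • b + g' a • v) := by
  have hfst := (hf.comp (u, v) (hasFDerivAt_fst (𝕜 := ℝ) (p := (u, v)))).smul
    (hasFDerivAt_fst (p := (u, v)))
  have hsnd := (hg.comp (u, v) (hasFDerivAt_fst (𝕜 := ℝ) (p := (u, v)))).smul
    (hasFDerivAt_snd (p := (u, v)))
  have h : HasFDerivAt (fun p : E × F => (f p.1 • p.1, g p.1 • p.2)) _ (u, v) :=
    hfst.prodMk hsnd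
  rw [h.fderiv]
  simp

theorem hasFDerivAt_two_div_one_sub_norm_sq {u : E} (hu : 1 - ‖u‖ ^ 2 ≠ 0) :
    HasFDerivAt (fun x : E => 2 / (1 - ‖x‖ ^ 2)) ((2 / (1 - ‖u‖ ^ 2)) ^ 2 • innerSL ℝ u) u := by
  have hdiv : HasDerivAt (fun t : ℝ => 2 / (1 - t)) (2 / (1 - ‖u‖ ^ 2) ^ 2) (‖u‖ ^ 2) :=
    ((hasDerivAt_const _ (2 : ℝ)).fun_div ((hasDerivAt_id' (‖u‖ ^ 2)).const_sub 1) hu).congr_deriv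
      (by ring)
  refine (hdiv.comp_hasFDerivAt u (hasStrictFDerivAt_norm_sq u).hasFDerivAt).congr_fderiv ?_
  ext a
  simp only [smul_apply, coe_innerSL_apply, nsmul_eq_mul, Nat.cast_ofNat, smul_eq_mul]
  field_simp

theorem hasFDerivAt_one_add_norm_sq_div_one_sub_norm_sq {u : E} (hu : 1 - ‖u‖ ^ 2 ≠ 0) :
    HasFDerivAt (fun x : E => (1 + ‖x‖ ^ 2) / (1 - ‖x‖ ^ 2))
      ((2 / (1 - ‖u‖ ^ 2)) ^ 2 • innerSL ℝ u) u := by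
  have hopen : IsOpen {x : E | 1 - ‖x‖ ^ 2 ≠ 0} := isOpen_ne_fun (by fun_prop) (by fun_prop)
  refine ((hasFDerivAt_two_div_one_sub_norm_sq hu).sub_const 1).congr_of_eventuallyEq ?_
  filter_upwards [hopen.mem_nhds hu] with x hx
  field_simp
  ring

theorem norm_sq_sub_norm_sq_of_mul_one_sub_norm_sq_eq_two {L M : ℝ} {u a : E} {v b : F}
    (hL : L * (1 - ‖u‖ ^ 2) = 2) (hv : ‖v‖ = 1) (hb : ⟪v, b⟫ = 0) :
    ‖L • a + (L ^ 2 * ⟪u, a⟫) • u‖ ^ 2 - ‖M • b + (L ^ 2 * ⟪u, a⟫) • v‖ ^ 2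
      = L ^ 2 * ‖a‖ ^ 2 - M ^ 2 * ‖b‖ ^ 2 := by
  simp only [← real_inner_self_eq_norm_sq] at hL ⊢
  simp only [inner_add_left, inner_add_right, real_inner_smul_left, real_inner_smul_right,
    real_inner_comm u a, real_inner_comm v b, hb, real_inner_self_eq_norm_sq v, hv]
  linear_combination (-L ^ 3 * ⟪u, a⟫ ^ 2) * hL

end

/-- The pullback by `F` of the pseudo-Riemannian metric `q(a,b) = ‖a‖² - ‖b‖²` (restricted
to the quadric `{q = -1}`) is the warped product metric
`(4/(1-‖u‖²)²) g_D ⊕ -((1+‖u‖²)/(1-‖u‖²))² g_{Sⁿ}`: for `u ∈ D`, `v ∈ Sⁿ` and any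
tangent vector `(a,b)` (with `b` tangent to the sphere at `v`), the value of the ambient
form on `dF_{(u,v)}(a,b)` is `4/(1-‖u‖²)² ‖a‖² - ((1+‖u‖²)/(1-‖u‖²))² ‖b‖²`. -/
theorem warpF_pullback_metric (n : ℕ)
    (u a : EuclideanSpace ℝ (Fin 2)) (v b : EuclideanSpace ℝ (Fin (n + 1)))
    (hu : ‖u‖ < 1) (hv : ‖v‖ = 1) (hb : ⟪v, b⟫ = 0) :
    ‖(fderiv ℝ (warpF n) (u, v) (a, b)).1‖ ^ 2
      - ‖(fderiv ℝ (warpF n) (u, v) (a, b)).2‖ ^ 2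
      = 4 / (1 - ‖u‖ ^ 2) ^ 2 * ‖a‖ ^ 2
        - ((1 + ‖u‖ ^ 2) / (1 - ‖u‖ ^ 2)) ^ 2 * ‖b‖ ^ 2 := by
  have hr : 1 - ‖u‖ ^ 2 ≠ 0 := by nlinarith [norm_nonneg u]
  unfold warpF
  rw [fderiv_smul_prodMk_smul_apply v (hasFDerivAt_two_div_one_sub_norm_sq hr)
    (hasFDerivAt_one_add_norm_sq_div_one_sub_norm_sq hr)]
  simp only [smul_apply, innerSL_apply_apply, smul_eq_mul]
  rw [norm_sq_sub_norm_sq_of_mul_one_sub_norm_sq_eq_two (div_mul_cancel₀ 2 hr) hv hb]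
  norm_num [div_pow]
end

section
/- Let γ ∈ SO_0(2,n+1) admit isotropic vectors e_+, e_- with ⟨e_+,e_-⟩ = 1, γ·e_+ = λ e_+, γ·e_- = λ^{-1} e_- for some λ > 1, and suppose the restriction of γ to V = (span(e_+,e_-))^⊥ has spectral radius strictly less than λ. Let v = α(e_- + e_+) + w with α ≠ 0, w ∈ V, and q(v) = -1. Then (1/k) arcosh|⟨v, γ^k · v⟩| → log λ as k → ∞. -/
/-- Sign of the `i`-th coordinate in the quadratic form of signature `(2, m-2)`:
`q(x) = x₀² + x₁² - x₂² - ⋯`. -/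
noncomputable def qsgn {m : ℕ} (i : Fin m) : ℝ := if (i : ℕ) < 2 then 1 else -1

/-- The symmetric bilinear form associated to `q`. -/
noncomputable def Bq {m : ℕ} (u v : Fin m → ℝ) : ℝ := ∑ i, qsgn i * u i * v i

/-- The quadratic form `q` of signature `(2, m-2)`. -/
noncomputable def Qq {m : ℕ} (u : Fin m → ℝ) : ℝ := Bq u u

/-- The inverse hyperbolic cosine. -/
noncomputable def arcosh (x : ℝ) : ℝ := Real.log (x + Real.sqrt (x ^ 2 - 1))

/-!
Writing `v = α (e₋ + e₊) + w`, invariance of the form and of `V` under `γ` gives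
`⟨v, γᵏ v⟩ = α² (λᵏ + λ⁻ᵏ) + ⟨w, γᵏ w⟩`, and the last term is `O(μᵏ)` with `μ < λ`.
Hence `⟨v, γᵏ v⟩ / λᵏ → α² > 0`, so `log |⟨v, γᵏ v⟩| / k → log λ`; since
`log x ≤ arcosh x ≤ log x + log 2` for `x ≥ 1`, the same limit holds for `arcosh`.
-/

open Filter Topology

section BilinearForm

variable {m : ℕ}

lemma Bq_comm (u v : Fin m → ℝ) : Bq u v = Bq v u :=
  Finset.sum_congr rfl fun _ _ => by ring

lemma Bq_add_right (u v w : Fin m → ℝ) : Bq u (v + w) = Bq u v + Bq u w := by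
  simp [Bq, mul_add, Finset.sum_add_distrib]

lemma Bq_smul_right (c : ℝ) (u v : Fin m → ℝ) : Bq u (c • v) = c * Bq u v := by
  simp only [Bq, Finset.mul_sum]
  exact Finset.sum_congr rfl fun _ _ => by simp [mul_comm, mul_left_comm]

lemma Bq_add_left (u v w : Fin m → ℝ) : Bq (u + v) w = Bq u w + Bq v w := by
  rw [Bq_comm, Bq_add_right, Bq_comm w u, Bq_comm w v]

lemma Bq_smul_left (c : ℝ) (u v : Fin m → ℝ) : Bq (c • u) v = c * Bq u v := by
  rw [Bq_comm, Bq_smul_right, Bq_comm]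

lemma abs_Bq_le (u v : Fin m → ℝ) : |Bq u v| ≤ m * ‖u‖ * ‖v‖ := by
  have hsgn (i : Fin m) : |qsgn i| = 1 := by unfold qsgn; split <;> simp
  calc |Bq u v| ≤ ∑ i, |qsgn i * u i * v i| := Finset.abs_sum_le_sum_abs _ _
    _ ≤ ∑ _i : Fin m, ‖u‖ * ‖v‖ := Finset.sum_le_sum fun i _ => by
        rw [abs_mul, abs_mul, hsgn, one_mul]
        exact mul_le_mul (norm_le_pi_norm u i) (norm_le_pi_norm v i) (abs_nonneg _)
          (norm_nonneg _)
    _ = m * ‖u‖ * ‖v‖ := by simp [mul_assoc]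

end BilinearForm

lemma Module.End.pow_apply_of_apply_eq_smul {R M : Type*} [Semiring R] [AddCommMonoid M]
    [Module R M] {f : Module.End R M} {c : R} {x : M} (h : f x = c • x) (k : ℕ) :
    (f ^ k) x = c ^ k • x := by
  induction k with
  | zero => simp
  | succ k ih => rw [pow_succ, Module.End.mul_apply, h, map_smul, ih, smul_smul, pow_succ']

section Isometry

variable {m : ℕ} {g : Module.End ℝ (Fin m → ℝ)} (hiso : ∀ x y, Bq (g x) (g y) = Bq x y)
include hiso

lemma Bq_pow_apply_pow_apply (k : ℕ) (x y : Fin m → ℝ) :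
    Bq ((g ^ k) x) ((g ^ k) y) = Bq x y := by
  induction k generalizing x y with
  | zero => simp
  | succ k ih => rw [pow_succ, Module.End.mul_apply, Module.End.mul_apply, ih, hiso]

lemma Bq_pow_apply_eq_zero {e x : Fin m → ℝ} {c : ℝ} (hc : c ≠ 0) (he : g e = c • e)
    (hx : Bq e x = 0) (k : ℕ) : Bq e ((g ^ k) x) = 0 := by
  have hpre : (g ^ k) ((c ^ k)⁻¹ • e) = e := by
    rw [map_smul, Module.End.pow_apply_of_apply_eq_smul he, smul_smul,
      inv_mul_cancel₀ (pow_ne_zero k hc), one_smul]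
  rw [← hpre, Bq_pow_apply_pow_apply hiso, Bq_smul_left, hx, mul_zero]

lemma Bq_smul_add_pow_apply {ep em w : Fin m → ℝ} {l : ℝ} (α : ℝ) (hl : l ≠ 0)
    (hep : Qq ep = 0) (hem : Qq em = 0) (hpair : Bq ep em = 1)
    (hgep : g ep = l • ep) (hgem : g em = l⁻¹ • em)
    (hwp : Bq ep w = 0) (hwm : Bq em w = 0) (k : ℕ) :
    Bq (α • (em + ep) + w) ((g ^ k) (α • (em + ep) + w)) =
      α ^ 2 * (l ^ k + l⁻¹ ^ k) + Bq w ((g ^ k) w) := by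
  have hep' : Bq ep ((g ^ k) w) = 0 := Bq_pow_apply_eq_zero hiso hl hgep hwp k
  have hem' : Bq em ((g ^ k) w) = 0 := Bq_pow_apply_eq_zero hiso (inv_ne_zero hl) hgem hwm k
  have hpair' : Bq em ep = 1 := by rw [Bq_comm, hpair]
  rw [Bq_comm] at hwp hwm
  rw [Qq] at hep hem
  simp only [map_add, map_smul, Module.End.pow_apply_of_apply_eq_smul hgep,
    Module.End.pow_apply_of_apply_eq_smul hgem, Bq_add_left, Bq_add_right, Bq_smul_left,
    Bq_smul_right, hep, hem, hpair, hpair', hwp, hwm, hep', hem']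
  ring

end Isometry

lemma tendsto_norm_pow_apply_div_pow {R E : Type*} [Semiring R] [NormedAddCommGroup E]
    [Module R E] (f : Module.End R E) {x : E} {μ C l : ℝ} (hl : 0 < l) (hμl : μ < l)
    (hC : 0 ≤ C) (hbound : ∀ k : ℕ, ‖(f ^ k) x‖ ≤ C * μ ^ k * ‖x‖) :
    Tendsto (fun k : ℕ => ‖(f ^ k) x‖ / l ^ k) atTop (𝓝 0) := by
  rcases le_or_gt 0 μ with hμ | hμ
  · have hgeom := (tendsto_pow_atTop_nhds_zero_of_lt_one (div_nonneg hμ hl.le)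
      ((div_lt_one hl).mpr hμl)).const_mul (C * ‖x‖)
    rw [mul_zero] at hgeom
    refine squeeze_zero (fun k => by positivity) (fun k => ?_) hgeom
    rw [div_pow, div_le_iff₀ (by positivity)]
    calc ‖(f ^ k) x‖ ≤ C * μ ^ k * ‖x‖ := hbound k
      _ = C * ‖x‖ * (μ ^ k / l ^ k) * l ^ k := by field_simp
  · -- a negative rate forces `f x = 0`
    have hfx : f x = 0 := by
      refine norm_le_zero_iff.mp ((by simpa using hbound 1 : ‖f x‖ ≤ C * μ * ‖x‖).trans ?_)
      exact mul_nonpos_of_nonpos_of_nonneg (mul_nonpos_of_nonneg_of_nonpos hC hμ.le)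
        (norm_nonneg x)
    refine (tendsto_add_atTop_iff_nat 1).mp (tendsto_const_nhds.congr fun k => ?_)
    rw [pow_succ, Module.End.mul_apply, hfx, map_zero, norm_zero, zero_div]

lemma log_le_arcosh {x : ℝ} (hx : 1 ≤ x) : Real.log x ≤ arcosh x :=
  Real.log_le_log (by linarith) (by nlinarith [Real.sqrt_nonneg (x ^ 2 - 1)])

lemma arcosh_le_log_two_add_log {x : ℝ} (hx : 1 ≤ x) : arcosh x ≤ Real.log 2 + Real.log x := by
  rw [← Real.log_mul two_ne_zero (by linarith)]
  refine Real.log_le_log (by nlinarith [Real.sqrt_nonneg (x ^ 2 - 1)]) ?_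
  have : Real.sqrt (x ^ 2 - 1) ≤ x := by
    simpa [Real.sqrt_sq (by linarith : 0 ≤ x)] using
      Real.sqrt_le_sqrt (by linarith : x ^ 2 - 1 ≤ x ^ 2)
  linarith

lemma tendsto_log_div_of_tendsto_div_pow {x : ℕ → ℝ} {l A : ℝ} (hl : 0 < l) (hA : 0 < A)
    (h : Tendsto (fun k => x k / l ^ k) atTop (𝓝 A)) :
    Tendsto (fun k : ℕ => Real.log (x k) / k) atTop (𝓝 (Real.log l)) := by
  have hlog : Tendsto (fun k : ℕ => Real.log (x k / l ^ k) / k + Real.log l) atTop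
      (𝓝 (0 + Real.log l)) :=
    (((Real.continuousAt_log hA.ne').tendsto.comp h).div_atTop
      tendsto_natCast_atTop_atTop).add_const _
  rw [zero_add] at hlog
  refine hlog.congr' ?_
  filter_upwards [h.eventually_const_lt hA, eventually_ge_atTop 1] with k hk hk1
  have hlk : 0 < l ^ k := pow_pos hl k
  have hk0 : (k : ℝ) ≠ 0 := by positivity
  rw [Real.log_div (div_pos_iff_of_pos_right hlk |>.mp hk).ne' hlk.ne', Real.log_pow]
  field_simp
  ring

lemma tendsto_one_div_mul_arcosh_of_tendsto_log_div {x : ℕ → ℝ} {L : ℝ}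
    (hx : Tendsto x atTop atTop) (h : Tendsto (fun k : ℕ => Real.log (x k) / k) atTop (𝓝 L)) :
    Tendsto (fun k : ℕ => 1 / (k : ℝ) * arcosh (x k)) atTop (𝓝 L) := by
  have hup := (tendsto_const_div_atTop_nhds_zero_nat (Real.log 2)).add h
  rw [zero_add] at hup
  refine tendsto_of_tendsto_of_tendsto_of_le_of_le' h hup ?_ ?_ <;>
    filter_upwards [hx.eventually_ge_atTop 1] with k hk <;> rw [one_div_mul_eq_div]
  · exact div_le_div_of_nonneg_right (log_le_arcosh hk) k.cast_nonneg
  · rw [← add_div]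
    exact div_le_div_of_nonneg_right (arcosh_le_log_two_add_log hk) k.cast_nonneg

lemma tendsto_one_div_mul_arcosh_of_tendsto_div_pow {x : ℕ → ℝ} {l A : ℝ} (hl : 1 < l)
    (hA : 0 < A) (h : Tendsto (fun k => x k / l ^ k) atTop (𝓝 A)) :
    Tendsto (fun k : ℕ => 1 / (k : ℝ) * arcosh (x k)) atTop (𝓝 (Real.log l)) := by
  have hx : Tendsto x atTop atTop :=
    (h.pos_mul_atTop hA (tendsto_pow_atTop_atTop_of_one_lt hl)).congr fun k =>
      div_mul_cancel₀ _ (pow_ne_zero k (by positivity))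
  exact tendsto_one_div_mul_arcosh_of_tendsto_log_div hx
    (tendsto_log_div_of_tendsto_div_pow (by positivity) hA h)

theorem translation_length_of_proximal_general (n : ℕ)
    (g : Module.End ℝ (Fin (n + 3) → ℝ)) (ep em w : Fin (n + 3) → ℝ)
    (l α : ℝ) (hl : 1 < l) (hα : α ≠ 0)
    (hiso : ∀ x y, Bq (g x) (g y) = Bq x y)
    (hep : Qq ep = 0) (hem : Qq em = 0) (hpair : Bq ep em = 1)
    (hgep : g ep = l • ep) (hgem : g em = l⁻¹ • em)
    (hV : ∃ μ C : ℝ, μ < l ∧ 0 ≤ C ∧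
      ∀ x : Fin (n + 3) → ℝ, Bq ep x = 0 → Bq em x = 0 →
        ∀ k : ℕ, ‖(g ^ k) x‖ ≤ C * μ ^ k * ‖x‖)
    (hwp : Bq ep w = 0) (hwm : Bq em w = 0)
    (v : Fin (n + 3) → ℝ) (hv : v = α • (em + ep) + w) :
    Filter.Tendsto (fun k : ℕ => (1 / (k : ℝ)) * arcosh |Bq v ((g ^ k) v)|)
      Filter.atTop (nhds (Real.log l)) := by
  obtain ⟨μ, C, hμl, hC, hbound⟩ := hV
  have hl0 : 0 < l := by linarith
  have hrem : Tendsto (fun k : ℕ => Bq w ((g ^ k) w) / l ^ k) atTop (𝓝 0) := by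
    have hdecay := (tendsto_norm_pow_apply_div_pow g hl0 hμl hC
      (hbound w hwp hwm)).const_mul ((n + 3 : ℕ) * ‖w‖)
    rw [mul_zero] at hdecay
    refine squeeze_zero_norm (fun k => ?_) hdecay
    rw [Real.norm_eq_abs, abs_div, abs_of_pos (pow_pos hl0 k), mul_div_assoc']
    exact div_le_div_of_nonneg_right (abs_Bq_le _ _) (pow_pos hl0 k).le
  have hinv : Tendsto (fun k : ℕ => l⁻¹ ^ k) atTop (𝓝 0) :=
    tendsto_pow_atTop_nhds_zero_of_lt_one (by positivity) (inv_lt_one_of_one_lt₀ hl)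
  have hratio : Tendsto (fun k : ℕ => Bq v ((g ^ k) v) / l ^ k) atTop
      (𝓝 (α ^ 2 * (1 + 0 * 0) + 0)) := by
    refine (((tendsto_const_nhds.add (hinv.mul hinv)).const_mul _).add hrem).congr fun k => ?_
    rw [hv, Bq_smul_add_pow_apply hiso α hl0.ne' hep hem hpair hgep hgem hwp hwm, inv_pow]
    field_simp
  refine tendsto_one_div_mul_arcosh_of_tendsto_div_pow hl (pow_pos (abs_pos.mpr hα) 2) ?_
  simpa [abs_div, abs_of_pos (pow_pos hl0 _)] using hratio.abs

/-- Let `g ∈ SO₀(2,n+1)` be proximal, with isotropic eigenvectors `ep, em`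
(`⟨ep,em⟩ = 1`, eigenvalues `l > 1` and `l⁻¹`) and spectral radius `< l` on the
orthogonal `V` of the span of `ep, em`.  For `v = α(em+ep)+w` with `α ≠ 0`, `w ∈ V`
and `q(v) = -1`, the normalized space-like distances `(1/k) arcosh |⟨v, gᵏ v⟩|`
converge to `log l`. -/
theorem translation_length_of_proximal (n : ℕ)
    (g : Module.End ℝ (Fin (n + 3) → ℝ)) (ep em w : Fin (n + 3) → ℝ)
    (l α : ℝ) (hl : 1 < l) (hα : α ≠ 0)
    (hiso : ∀ x y, Bq (g x) (g y) = Bq x y)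
    (hep : Qq ep = 0) (hem : Qq em = 0) (hpair : Bq ep em = 1)
    (hgep : g ep = l • ep) (hgem : g em = l⁻¹ • em)
    (hV : ∃ μ C : ℝ, μ < l ∧ 0 ≤ C ∧
      ∀ x : Fin (n + 3) → ℝ, Bq ep x = 0 → Bq em x = 0 →
        ∀ k : ℕ, ‖(g ^ k) x‖ ≤ C * μ ^ k * ‖x‖)
    (hwp : Bq ep w = 0) (hwm : Bq em w = 0)
    (v : Fin (n + 3) → ℝ) (hv : v = α • (em + ep) + w) (hqv : Qq v = -1) :
    Filter.Tendsto (fun k : ℕ => (1 / (k : ℝ)) * arcosh |Bq v ((g ^ k) v)|)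
      Filter.atTop (nhds (Real.log l)) :=
  translation_length_of_proximal_general n g ep em w l α hl hα hiso hep hem hpair hgep hgem hV hwp
    hwm v hv
end
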